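/- arXiv:2403.01965 — 8 statements merged into one kernel-verified Lean document; each statement's English description precedes it below -/
import Mathlib

section
/- Let F be a field, and let f, g ∈ F[x₁,…,xₙ] be nonzero polynomials with g(0) = β ≠ 0 and deg g ≤ deg f. Then g divides f in F[x₁,…,xₙ] if and only if f − Q_{f,g}·g is the zero polynomial, where Q_{f,g} is the pseudo-quotient of f and g. -/
open MvPolynomial

/-- `Hom_{≤ k}(p)`: the sum of the homogeneous components of `p` of degree at most `k`. -/
noncomputable def homTruncLE {n : ℕ} {F : Type*} [CommSemiring F] (k : ℕ)
    (p : MvPolynomial (Fin n) F) : MvPolynomial (Fin n) F :=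
  ∑ i ∈ Finset.range (k + 1), MvPolynomial.homogeneousComponent i p

/-- The pseudo-quotient of `f` and `g` (Forbes), where `β = g(0)`,
`D = deg f`, `d = deg g` and `g̃ = 1 - g/β`:
`Q_{f,g} = Hom_{≤ D-d}((f/β) · (1 + g̃ + ⋯ + g̃^{D-d}))`. -/
noncomputable def pseudoQuotient {n : ℕ} {F : Type*} [Field F]
    (f g : MvPolynomial (Fin n) F) : MvPolynomial (Fin n) F :=
  let β : F := MvPolynomial.eval (0 : Fin n → F) g
  let D : ℕ := f.totalDegree
  let d : ℕ := g.totalDegree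
  let gt : MvPolynomial (Fin n) F := 1 - MvPolynomial.C β⁻¹ * g
  homTruncLE (D - d) ((MvPolynomial.C β⁻¹ * f) * ∑ i ∈ Finset.range (D - d + 1), gt ^ i)

/-!
If `f = g * q`, then `f / β = q * (1 - g̃)`, so with `m = D - d` the telescoping sum gives
`(f / β) * (1 + g̃ + ⋯ + g̃^m) = q * (1 - g̃^(m+1))`. As `g̃` has no constant term, `g̃^(m+1)`
has no monomial of degree `≤ m`, while `deg q ≤ m`; truncating at degree `m` therefore
returns exactly `q`, i.e. `Q_{f,g} = q` whenever `g ∣ f`.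
-/

theorem MvPolynomial.coeff_mul_one_sub_pow_of_degree_lt {σ R : Type*} [CommRing R]
    {p : MvPolynomial σ R} (hp : constantCoeff p = 0) (q : MvPolynomial σ R) {k : ℕ}
    {d : σ →₀ ℕ} (hd : d.degree < k) :
    coeff d (q * (1 - p ^ k)) = coeff d q := by
  let ι := coeToMvPowerSeries.ringHom (σ := σ) (R := R)
  have hp' : MvPowerSeries.constantCoeff (ι p) = 0 := by
    rw [← MvPowerSeries.coeff_zero_eq_constantCoeff_apply, coeToMvPowerSeries.ringHom_apply,
      coeff_coe, ← constantCoeff_eq, hp]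
  have hk : (d.degree : ℕ∞) < (ι (p ^ k)).order := by
    rw [map_pow]
    exact (Nat.cast_lt.2 hd).trans_le (MvPowerSeries.le_order_pow_of_constantCoeff_eq_zero k hp')
  have := MvPowerSeries.coeff_mul_left_one_sub_of_lt_order (f := ι q) d hk
  rwa [← map_one ι, ← map_sub, ← map_mul, coeToMvPowerSeries.ringHom_apply,
    coeToMvPowerSeries.ringHom_apply, coeff_coe, coeff_coe] at this

section homTruncLE

variable {n : ℕ} {R : Type*}

theorem coeff_homTruncLE [CommSemiring R] (k : ℕ) (p : MvPolynomial (Fin n) R)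
    (d : Fin n →₀ ℕ) :
    coeff d (homTruncLE k p) = if d.degree ≤ k then coeff d p else 0 := by
  simp [homTruncLE, coeff_sum, coeff_homogeneousComponent]

theorem homTruncLE_mul_one_sub_pow [CommRing R] {p : MvPolynomial (Fin n) R}
    (hp : constantCoeff p = 0) {q : MvPolynomial (Fin n) R} {k : ℕ} (hq : q.totalDegree ≤ k) :
    homTruncLE k (q * (1 - p ^ (k + 1))) = q := by
  ext d
  rw [coeff_homTruncLE]
  split_ifs with hd
  · exact coeff_mul_one_sub_pow_of_degree_lt hp q (Nat.lt_succ_of_le hd)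
  · exact (coeff_eq_zero_of_totalDegree_lt (hq.trans_lt (not_le.1 hd))).symm

end homTruncLE

theorem pseudoQuotient_mul_cancel_left {n : ℕ} {F : Type*} [Field F]
    {g : MvPolynomial (Fin n) F} (hβ : eval 0 g ≠ 0) (q : MvPolynomial (Fin n) F) :
    pseudoQuotient (g * q) g = q := by
  have hg : g ≠ 0 := by rintro rfl; simp at hβ
  rw [pseudoQuotient]
  set m := (g * q).totalDegree - g.totalDegree
  set β := eval 0 g
  set gt := 1 - C β⁻¹ * g
  have hq : q.totalDegree ≤ m := by
    rcases eq_or_ne q 0 with rfl | hq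
    · simp
    · simp only [m, totalDegree_mul_of_isDomain hg hq]; omega
  have hgt : constantCoeff gt = 0 := by
    simp [gt, β, ← eval_zero, inv_mul_cancel₀ hβ]
  have htelescope : C β⁻¹ * (g * q) * ∑ i ∈ Finset.range (m + 1), gt ^ i
      = q * (1 - gt ^ (m + 1)) := by
    rw [← mul_neg_geom_sum, sub_sub_cancel]; ring
  rw [htelescope]
  exact homTruncLE_mul_one_sub_pow hgt hq

theorem stmt0_general {n : ℕ} {F : Type*} [Field F] (f g : MvPolynomial (Fin n) F)
    (hβ : MvPolynomial.eval (0 : Fin n → F) g ≠ 0) :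
    g ∣ f ↔ f - pseudoQuotient f g * g = 0 := by
  constructor
  · rintro ⟨q, rfl⟩
    rw [pseudoQuotient_mul_cancel_left hβ, mul_comm, sub_self]
  · intro h
    exact Dvd.intro_left _ (sub_eq_zero.1 h).symm

/-- `g` divides `f` iff `f - Q_{f,g} · g = 0`. -/
theorem stmt0 {n : ℕ} {F : Type*} [Field F] (f g : MvPolynomial (Fin n) F)
    (hf : f ≠ 0) (hg : g ≠ 0)
    (hβ : MvPolynomial.eval (0 : Fin n → F) g ≠ 0)
    (hdeg : g.totalDegree ≤ f.totalDegree) :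
    g ∣ f ↔ f - pseudoQuotient f g * g = 0 :=
  stmt0_general f g hβ
end

section
/- Let F be a field of characteristic zero, let f, g ∈ F[x₁,…,xₙ,y] be monic in y with g₀(x) := g(x,0) ≠ 0 and deg_y g ≤ deg_y (∂f/∂y)², and let a ∈ Fⁿ satisfy g(a,0) ≠ 0. Then substituting x := a into the cleared pseudo-resultant of f and g yields the cleared pseudo-resultant of the univariate polynomials f(a,y) and g(a,y); that is, R̂_{f,g}(a,y) = R̂_{f(a,·),g(a,·)}(y) as polynomials in F[y]. -/
open Polynomial

/-- `Hom^y_{≤ k}(p)`: discard all terms of `p : R[X]` whose degree exceeds `k`. -/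
noncomputable def yTrunc {R : Type*} [CommRing R] (k : ℕ) (p : Polynomial R) : Polynomial R :=
  ∑ i ∈ Finset.range (k + 1), Polynomial.C (p.coeff i) * Polynomial.X ^ i

/-- The cleared pseudo-resultant of `f` and `g` with respect to the (univariate) variable:
with `S = (∂f)²`, `D = deg S`, `d = deg g`, `g₀ = g(0)` and
`Q_num = Hom_{≤ D-d}[S · Σ_{i=0}^{D-d} g₀^{D-d-i} (g₀ - g)^i]`, it is
`R̂_{f,g} = g₀^{D-d+1} · S - Q_num · g`. -/
noncomputable def clearedPseudoRes {R : Type*} [CommRing R] (f g : Polynomial R) :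
    Polynomial R :=
  let S : Polynomial R := (Polynomial.derivative f) ^ 2
  let D : ℕ := S.natDegree
  let d : ℕ := g.natDegree
  let g0 : R := g.coeff 0
  let Qnum : Polynomial R := yTrunc (D - d)
    (S * ∑ i ∈ Finset.range (D - d + 1),
      Polynomial.C g0 ^ (D - d - i) * (Polynomial.C g0 - g) ^ i)
  Polynomial.C g0 ^ (D - d + 1) * S - Qnum * g

section

variable {R S : Type*} [CommRing R] [CommRing S] (φ : R →+* S)

lemma yTrunc_map (k : ℕ) (p : R[X]) : (yTrunc k p).map φ = yTrunc k (p.map φ) := by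
  simp [yTrunc, Polynomial.map_sum]

/-- Apart from the degrees `D` and `d`, `clearedPseudoRes` is built from ring operations and
coefficients, all of which commute with `map φ`. -/
lemma clearedPseudoRes_map {f g : R[X]}
    (hD : (derivative (f.map φ) ^ 2).natDegree = (derivative f ^ 2).natDegree)
    (hd : (g.map φ).natDegree = g.natDegree) :
    (clearedPseudoRes f g).map φ = clearedPseudoRes (f.map φ) (g.map φ) := by
  rw [derivative_map] at hD
  simp only [clearedPseudoRes, hD, hd, coeff_map, Polynomial.map_sub, Polynomial.map_mul,
    Polynomial.map_pow, Polynomial.map_C, yTrunc_map, Polynomial.map_sum, derivative_map]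

lemma natDegree_derivative_sq_map_of_monic [NoZeroDivisors R] [NoZeroDivisors S] [Nontrivial S]
    [IsAddTorsionFree R] [IsAddTorsionFree S] {f : R[X]} (hf : f.Monic) :
    (derivative (f.map φ) ^ 2).natDegree = (derivative f ^ 2).natDegree := by
  simp only [natDegree_pow, natDegree_derivative, hf.natDegree_map φ]

end

theorem stmt1_general {n : ℕ} {F : Type*} [Field F] [CharZero F]
    (f g : Polynomial (MvPolynomial (Fin n) F))
    (hf : f.Monic) (hg : g.Monic)
    (a : Fin n → F) :
    (clearedPseudoRes f g).map (MvPolynomial.eval a) =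
      clearedPseudoRes (f.map (MvPolynomial.eval a)) (g.map (MvPolynomial.eval a)) :=
  clearedPseudoRes_map _ (natDegree_derivative_sq_map_of_monic _ hf) (hg.natDegree_map _)

/-- substituting `x := a` into the cleared pseudo-resultant of `f` and `g`
yields the cleared pseudo-resultant of the univariate polynomials `f(a,·)` and `g(a,·)`. -/
theorem stmt1 {n : ℕ} {F : Type*} [Field F] [CharZero F]
    (f g : Polynomial (MvPolynomial (Fin n) F))
    (hf : f.Monic) (hg : g.Monic)
    (hg0 : g.coeff 0 ≠ 0)
    (hdeg : g.natDegree ≤ ((Polynomial.derivative f) ^ 2).natDegree)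
    (a : Fin n → F)
    (ha : MvPolynomial.eval a (g.coeff 0) ≠ 0) :
    (clearedPseudoRes f g).map (MvPolynomial.eval a) =
      clearedPseudoRes (f.map (MvPolynomial.eval a)) (g.map (MvPolynomial.eval a)) :=
  stmt1_general f g hf hg a
end

section
/- Let F be a field of characteristic zero and suppose f ∈ F[x₁,…,xₙ,y] is monic in y and factors as f = g·h, where g is irreducible, monic in y, g does not divide h, g₀(x) := g(x,0) is nonzero, and deg_y g ≤ deg_y (∂f/∂y)². Then the cleared pseudo-resultant R̂_{f,g} is a nonzero polynomial in F[x₁,…,xₙ,y]. -/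
/-!
If `R̂_{f,g} = 0` then `g` divides `g₀^k · (f')²`. As `g` is prime of positive degree and
`g₀ ≠ 0`, it divides `f' = g'h + gh'`, hence `g'h`. In characteristic zero `g'` is nonzero of
smaller degree, so `g ∤ g'` and therefore `g ∣ h`.
-/

open Polynomial

namespace Polynomial

variable {R : Type*} [CommRing R]

theorem exists_dvd_C_pow_mul_derivative_sq_of_clearedPseudoRes_eq_zero {f g : R[X]}
    (h : clearedPseudoRes f g = 0) : ∃ k, g ∣ C (g.coeff 0) ^ k * derivative f ^ 2 :=
  ⟨_, _, (sub_eq_zero.mp h).trans (mul_comm _ _)⟩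

variable [IsDomain R]

theorem not_dvd_C_of_natDegree_pos {g : R[X]} (hg : 0 < g.natDegree) {a : R} (ha : a ≠ 0) :
    ¬ g ∣ C a := fun hdvd => by
  have := natDegree_le_of_dvd hdvd (C_ne_zero.mpr ha)
  rw [natDegree_C] at this
  omega

theorem Prime.dvd_of_dvd_C_pow_mul {g p : R[X]} (hg : Prime g) (hdeg : 0 < g.natDegree)
    {a : R} (ha : a ≠ 0) {k : ℕ} (h : g ∣ C a ^ k * p) : g ∣ p :=
  (hg.dvd_or_dvd h).resolve_left fun hC =>
    not_dvd_C_of_natDegree_pos hdeg ha (hg.dvd_of_dvd_pow hC)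

theorem not_dvd_derivative_of_natDegree_pos [IsAddTorsionFree R] {g : R[X]}
    (hg : 0 < g.natDegree) : ¬ g ∣ derivative g := fun hdvd => by
  have hg' : derivative g ≠ 0 := fun h0 => hg.ne' (derivative_eq_zero.mp h0)
  have := natDegree_le_of_dvd hdvd hg'
  have := natDegree_derivative_lt hg.ne'
  omega

theorem Prime.dvd_of_dvd_derivative_mul [IsAddTorsionFree R] {g h : R[X]} (hg : Prime g)
    (hdeg : 0 < g.natDegree) (hdvd : g ∣ derivative (g * h)) : g ∣ h := by
  rw [derivative_mul, dvd_add_left (dvd_mul_right g _)] at hdvd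
  exact (hg.dvd_or_dvd hdvd).resolve_left (not_dvd_derivative_of_natDegree_pos hdeg)

end Polynomial

theorem stmt3_general {n : ℕ} {F : Type*} [Field F] [CharZero F]
    (f g h : Polynomial (MvPolynomial (Fin n) F))
    (hfgh : f = g * h) (hgirr : Irreducible g) (hgmonic : g.Monic)
    (hgh : ¬ g ∣ h)
    (hg0 : g.coeff 0 ≠ 0) :
    clearedPseudoRes f g ≠ 0 := by
  intro hR
  obtain ⟨k, hk⟩ := exists_dvd_C_pow_mul_derivative_sq_of_clearedPseudoRes_eq_zero hR
  have hprime : Prime g := hgirr.prime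
  have hdeg : 0 < g.natDegree := hgmonic.natDegree_pos.mpr hgirr.ne_one
  have hdvd : g ∣ derivative (g * h) :=
    hfgh ▸ hprime.dvd_of_dvd_pow (hprime.dvd_of_dvd_C_pow_mul hdeg hg0 hk)
  exact hgh (hprime.dvd_of_dvd_derivative_mul hdeg hdvd)

/-- if `f` is monic in `y`, `f = g·h` with `g` irreducible, monic in `y`,
`g ∤ h`, `g₀ = g(x,0) ≠ 0` and `deg_y g ≤ deg_y (∂f/∂y)²`, then the cleared
pseudo-resultant `R̂_{f,g}` is a nonzero polynomial. -/
theorem stmt3 {n : ℕ} {F : Type*} [Field F] [CharZero F]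
    (f g h : Polynomial (MvPolynomial (Fin n) F))
    (hf : f.Monic) (hfgh : f = g * h) (hgirr : Irreducible g) (hgmonic : g.Monic)
    (hgh : ¬ g ∣ h)
    (hg0 : g.coeff 0 ≠ 0)
    (hdeg : g.natDegree ≤ ((Polynomial.derivative f) ^ 2).natDegree) :
    clearedPseudoRes f g ≠ 0 :=
  stmt3_general f g h hfgh hgirr hgmonic hgh hg0
end

section
/- Let F be a field with algebraic closure F̄. Suppose f ∈ F[x₁,…,xₙ,y] is monic in y and factors as f = g·h where g is irreducible and g does not divide h. Let a ∈ Fⁿ be such that g(a,y) does not divide ((∂f/∂y)(a,y))² in F[y]. Then there exists u ∈ F̄ such that g(a,u) = 0, f(a,u) = 0, h(a,u) ≠ 0, and (∂f/∂y)(a,u) ≠ 0; in particular, u is a root of the univariate polynomial f(a,y) of multiplicity exactly 1. -/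
/-!
Over `F̄` write `G, H, P = G * H` for the specialisations of `g, h, f` at `a`. At every root `u`
of `G` of multiplicity `m`, the factor `(X - u)^(m - 1)` divides `P' = G' H + G H'`, so
`(X - u)^m` divides `P'^2` as soon as `m ≥ 2`, and also when `m = 1` and `H(u) = 0`. Since `G`
splits over `F̄`, if this happened at every root then `G ∣ P'^2`. Hence some root `u` of `G` is
simple and not a root of `H`; it is then a simple root of `P`.
-/

open Polynomial

namespace Polynomial

section CommRing

variable {R : Type*} [CommRing R]

theorem pow_rootMultiplicity_sub_one_dvd_derivative_mul (G H : R[X]) (u : R) :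
    (X - C u) ^ (rootMultiplicity u G - 1) ∣ derivative (G * H) := by
  rw [derivative_mul]
  exact dvd_add ((pow_sub_one_dvd_derivative_of_pow_dvd (pow_rootMultiplicity_dvd G u)).mul_right _)
    (((pow_dvd_pow _ (Nat.sub_le _ 1)).trans (pow_rootMultiplicity_dvd G u)).mul_right _)

theorem pow_rootMultiplicity_dvd_derivative_mul_sq {G H : R[X]} {u : R}
    (hu : rootMultiplicity u G = 1 → H.IsRoot u) :
    (X - C u) ^ rootMultiplicity u G ∣ derivative (G * H) ^ 2 := by
  have hdvd := pow_rootMultiplicity_sub_one_dvd_derivative_mul G H u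
  have hG := pow_rootMultiplicity_dvd G u
  generalize rootMultiplicity u G = m at hu hdvd hG ⊢
  rcases m with _ | _ | m
  · rw [pow_zero]
    exact one_dvd _
  · have hH : X - C u ∣ H := dvd_iff_isRoot.2 (hu rfl)
    rw [zero_add, pow_one] at hG ⊢
    rw [derivative_mul]
    exact (dvd_add (hH.mul_left _) (hG.mul_right _)).trans (dvd_pow_self _ two_ne_zero)
  · calc (X - C u) ^ (m + 2) ∣ ((X - C u) ^ (m + 2 - 1)) ^ 2 := by
          rw [← pow_mul]; exact pow_dvd_pow _ (by omega)
      _ ∣ derivative (G * H) ^ 2 := pow_dvd_pow_of_dvd hdvd 2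

theorem rootMultiplicity_eq_one_iff {p : R[X]} {u : R} (hp : p ≠ 0) :
    rootMultiplicity u p = 1 ↔ p.IsRoot u ∧ ¬ (derivative p).IsRoot u := by
  have := rootMultiplicity_pos hp (x := u)
  have := one_lt_rootMultiplicity_iff_isRoot hp (t := u)
  grind

end CommRing

theorem Splits.dvd_of_forall_pow_rootMultiplicity_dvd {K : Type*} [Field K] {f g : K[X]}
    (hf : f.Splits) (hf0 : f ≠ 0) (hfg : ∀ u, (X - C u) ^ rootMultiplicity u f ∣ g) :
    f ∣ g := by
  classical
  rcases eq_or_ne g 0 with rfl | hg0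
  · exact dvd_zero f
  refine hf.dvd_of_roots_le_roots hf0 (Multiset.le_iff_count.2 fun u => ?_)
  rw [count_roots, count_roots, le_rootMultiplicity_iff hg0]
  exact hfg u

theorem exists_rootMultiplicity_eq_one_of_not_dvd_derivative_mul_sq {K : Type*} [Field K]
    {G H : K[X]} (hG : G.Splits) (hdvd : ¬ G ∣ derivative (G * H) ^ 2) :
    ∃ u, rootMultiplicity u G = 1 ∧ ¬ H.IsRoot u := by
  by_contra! hcon
  have hG0 : G ≠ 0 := by rintro rfl; simp at hdvd
  exact hdvd (hG.dvd_of_forall_pow_rootMultiplicity_dvd hG0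
    fun u => pow_rootMultiplicity_dvd_derivative_mul_sq (hcon u))

theorem exists_simple_root_mul_of_not_dvd_derivative_mul_sq {K : Type*} [Field K]
    {G H : K[X]} (hG : G.Splits) (hdvd : ¬ G ∣ derivative (G * H) ^ 2) :
    ∃ u, G.IsRoot u ∧ (G * H).IsRoot u ∧ ¬ H.IsRoot u ∧ ¬ (derivative (G * H)).IsRoot u ∧
      rootMultiplicity u (G * H) = 1 := by
  obtain ⟨u, hGu, hHu⟩ := exists_rootMultiplicity_eq_one_of_not_dvd_derivative_mul_sq hG hdvd
  have hGH0 : G * H ≠ 0 := by rintro hGH; simp [hGH] at hdvd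
  have hGHu : rootMultiplicity u (G * H) = 1 := by
    rw [rootMultiplicity_mul hGH0, hGu, rootMultiplicity_eq_zero hHu]
  obtain ⟨hGroot, -⟩ := (rootMultiplicity_eq_one_iff (left_ne_zero_of_mul hGH0)).1 hGu
  obtain ⟨hGHroot, hGH'⟩ := (rootMultiplicity_eq_one_iff hGH0).1 hGHu
  exact ⟨u, hGroot, hGHroot, hHu, hGH', hGHu⟩

end Polynomial

theorem stmt4_general {n : ℕ} {F : Type*} [Field F]
    (f g h : Polynomial (MvPolynomial (Fin n) F))
    (hfgh : f = g * h)
    (a : Fin n → F)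
    (ha : ¬ (g.map (MvPolynomial.eval a)) ∣
        ((Polynomial.derivative f).map (MvPolynomial.eval a)) ^ 2) :
    ∃ u : AlgebraicClosure F,
      Polynomial.eval u
        ((g.map (MvPolynomial.eval a)).map (algebraMap F (AlgebraicClosure F))) = 0 ∧
      Polynomial.eval u
        ((f.map (MvPolynomial.eval a)).map (algebraMap F (AlgebraicClosure F))) = 0 ∧
      Polynomial.eval u
        ((h.map (MvPolynomial.eval a)).map (algebraMap F (AlgebraicClosure F))) ≠ 0 ∧
      Polynomial.eval u
        (((Polynomial.derivative f).map (MvPolynomial.eval a)).map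
          (algebraMap F (AlgebraicClosure F))) ≠ 0 ∧
      Polynomial.rootMultiplicity u
        ((f.map (MvPolynomial.eval a)).map (algebraMap F (AlgebraicClosure F))) = 1 := by
  set π := algebraMap F (AlgebraicClosure F)
  have hdvd : ¬ (g.map (MvPolynomial.eval a)).map π ∣
      derivative ((g.map (MvPolynomial.eval a)).map π * (h.map (MvPolynomial.eval a)).map π) ^ 2 := by
    rwa [← Polynomial.map_mul, ← Polynomial.map_mul, ← hfgh, derivative_map, derivative_map,
      ← Polynomial.map_pow, map_dvd_map']
  obtain ⟨u, hGu, hPu, hHu, hP'u, hmult⟩ :=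
    exists_simple_root_mul_of_not_dvd_derivative_mul_sq (IsAlgClosed.splits _) hdvd
  rw [← Polynomial.map_mul, ← Polynomial.map_mul, ← hfgh] at hPu hP'u hmult
  rw [derivative_map, derivative_map] at hP'u
  exact ⟨u, hGu, hPu, hHu, hP'u, hmult⟩

/-- if `f = g·h` is monic in `y`, `g` irreducible, `g ∤ h`, and
`a ∈ Fⁿ` is such that `g(a,y) ∤ ((∂f/∂y)(a,y))²` in `F[y]`, then there is
`u` in the algebraic closure of `F` with `g(a,u) = 0`, `f(a,u) = 0`,
`h(a,u) ≠ 0`, `(∂f/∂y)(a,u) ≠ 0`, and `u` is a root of `f(a,y)` of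
multiplicity exactly `1`. -/
theorem stmt4 {n : ℕ} {F : Type*} [Field F]
    (f g h : Polynomial (MvPolynomial (Fin n) F))
    (hf : f.Monic) (hfgh : f = g * h) (hgirr : Irreducible g) (hgh : ¬ g ∣ h)
    (a : Fin n → F)
    (ha : ¬ (g.map (MvPolynomial.eval a)) ∣
        ((Polynomial.derivative f).map (MvPolynomial.eval a)) ^ 2) :
    ∃ u : AlgebraicClosure F,
      Polynomial.eval u
        ((g.map (MvPolynomial.eval a)).map (algebraMap F (AlgebraicClosure F))) = 0 ∧
      Polynomial.eval u
        ((f.map (MvPolynomial.eval a)).map (algebraMap F (AlgebraicClosure F))) = 0 ∧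
      Polynomial.eval u
        ((h.map (MvPolynomial.eval a)).map (algebraMap F (AlgebraicClosure F))) ≠ 0 ∧
      Polynomial.eval u
        (((Polynomial.derivative f).map (MvPolynomial.eval a)).map
          (algebraMap F (AlgebraicClosure F))) ≠ 0 ∧
      Polynomial.rootMultiplicity u
        ((f.map (MvPolynomial.eval a)).map (algebraMap F (AlgebraicClosure F))) = 1 :=
  stmt4_general f g h hfgh a ha
end

section
/- Let F be a field, let f, g ∈ F[y] be polynomials with g dividing f, let α ∈ F, and let e ≥ 2 be an integer such that (y−α)^e divides g. Then (y−α)^e divides (f′)², where f′ denotes the derivative of f with respect to y. -/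
open Polynomial

/-- A factor of multiplicity `e` in `p` survives in `p'` with multiplicity `e - 1`, and
`e ≤ 2 (e - 1)` once `e ≥ 2`. -/
theorem Polynomial.pow_dvd_derivative_sq_of_pow_dvd {R : Type*} [CommSemiring R]
    {p q : R[X]} {e : ℕ} (he : 2 ≤ e) (h : q ^ e ∣ p) : q ^ e ∣ derivative p ^ 2 :=
  calc q ^ e ∣ (q ^ (e - 1)) ^ 2 := by rw [← pow_mul]; exact pow_dvd_pow q (by omega)
    _ ∣ derivative p ^ 2 := pow_dvd_pow_of_dvd (pow_sub_one_dvd_derivative_of_pow_dvd h) 2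

/-- if `g ∣ f` in `F[y]` and `(y-α)^e ∣ g` with `e ≥ 2`, then
`(y-α)^e ∣ (f')²`. -/
theorem stmt5 {F : Type*} [Field F] (f g : Polynomial F) (hdvd : g ∣ f)
    (α : F) (e : ℕ) (he : 2 ≤ e)
    (h : (Polynomial.X - Polynomial.C α) ^ e ∣ g) :
    (Polynomial.X - Polynomial.C α) ^ e ∣ (Polynomial.derivative f) ^ 2 :=
  pow_dvd_derivative_sq_of_pow_dvd he (h.trans hdvd)
end

section
/- Let F be a field of characteristic zero, let P ∈ F[x₁,…,xₙ,y] be monic in y, and let u ∈ F satisfy P(0,u) = 0 and (∂P/∂y)(0,u) ≠ 0. Then for every integer k ≥ 0 there exists a polynomial Φ_k ∈ F[x₁,…,xₙ] such that Φ_k(0) = u and P(x, Φ_k(x)) lies in the ideal ⟨x₁,…,xₙ⟩^{k+1} of F[x₁,…,xₙ]. -/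
/-!
Newton's method modulo powers of the ideal `I = ⟨x₁,…,xₙ⟩`. If `P(a) ∈ I^m` with `m ≥ 1` and `c`
inverts `P'(a)` modulo `I`, then `b = a - c P(a)` satisfies
`P(b) = P(a) (1 - P'(a) c) + O(P(a)²) ∈ I^(m+1)`; since `b ≡ a (mod I)`, the same `c` still
inverts `P'(b)` modulo `I`, so the step can be iterated. Start at the constant `u`, with `c` the
inverse of `(∂P/∂y)(0,u)`.
-/

open Polynomial

namespace Polynomial

variable {R : Type*} [CommRing R] {I : Ideal R} (P : R[X])

theorem eval_sub_mul_eval_mem_pow_succ {a c : R} {m : ℕ} (hm : m ≠ 0) (ha : P.eval a ∈ I ^ m)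
    (hc : 1 - P.derivative.eval a * c ∈ I) : P.eval (a - c * P.eval a) ∈ I ^ (m + 1) := by
  obtain ⟨r, hr⟩ := P.binomExpansion a (-(c * P.eval a))
  have hsq : P.eval a ^ 2 ∈ I ^ (m + 1) :=
    Ideal.pow_le_pow_right (show m + 1 ≤ m + m by omega) (by rw [pow_two, pow_add]; exact Ideal.mul_mem_mul ha ha)
  have hlin : P.eval a * (1 - P.derivative.eval a * c) ∈ I ^ (m + 1) := by
    rw [pow_succ]; exact Ideal.mul_mem_mul ha hc
  rw [sub_eq_add_neg, hr,
    show P.eval a + P.derivative.eval a * -(c * P.eval a) + r * (-(c * P.eval a)) ^ 2 =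
      P.eval a * (1 - P.derivative.eval a * c) + r * c ^ 2 * P.eval a ^ 2 by ring]
  exact Ideal.add_mem _ hlin (Ideal.mul_mem_left _ _ hsq)

theorem exists_sub_mem_and_eval_mem_pow_succ {a c : R} (ha : P.eval a ∈ I)
    (hc : 1 - P.derivative.eval a * c ∈ I) (k : ℕ) :
    ∃ b, b - a ∈ I ∧ P.eval b ∈ I ^ (k + 1) := by
  induction k with
  | zero => exact ⟨a, by simp, by simpa using ha⟩
  | succ k ih =>
    obtain ⟨b, hba, hb⟩ := ih
    have hcb : 1 - P.derivative.eval b * c ∈ I := by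
      obtain ⟨t, ht⟩ := sub_dvd_eval_sub b a P.derivative
      have hdiff : P.derivative.eval b - P.derivative.eval a ∈ I := ht ▸ I.mul_mem_right t hba
      rw [show 1 - P.derivative.eval b * c =
        (1 - P.derivative.eval a * c) - (P.derivative.eval b - P.derivative.eval a) * c by ring]
      exact I.sub_mem hc (I.mul_mem_right c hdiff)
    refine ⟨b - c * P.eval b, ?_, P.eval_sub_mul_eval_mem_pow_succ k.succ_ne_zero hb hcb⟩
    rw [sub_right_comm]
    exact I.sub_mem hba (I.mul_mem_left c (Ideal.pow_le_self k.succ_ne_zero hb))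

end Polynomial

theorem MvPolynomial.mem_span_range_X_iff_eval_zero {σ R : Type*} [CommRing R]
    (f : MvPolynomial σ R) :
    f ∈ Ideal.span (Set.range (X : σ → MvPolynomial σ R)) ↔ eval (0 : σ → R) f = 0 := by
  rw [← pow_one (Ideal.span _), ← idealOfVars, mem_pow_idealOfVars_iff', eval_zero,
    constantCoeff_eq]
  simp [Finsupp.degree_eq_zero_iff]

theorem stmt6_general {n : ℕ} {F : Type*} [Field F]
    (P : Polynomial (MvPolynomial (Fin n) F)) (u : F)
    (h0 : Polynomial.eval u (P.map (MvPolynomial.eval (0 : Fin n → F))) = 0)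
    (h1 : Polynomial.eval u
        ((Polynomial.derivative P).map (MvPolynomial.eval (0 : Fin n → F))) ≠ 0) :
    ∀ k : ℕ, ∃ Φ : MvPolynomial (Fin n) F,
      MvPolynomial.eval (0 : Fin n → F) Φ = u ∧
      Polynomial.eval Φ P ∈
        (Ideal.span (Set.range (MvPolynomial.X : Fin n → MvPolynomial (Fin n) F))) ^ (k + 1) := by
  intro k
  have hu : MvPolynomial.eval (0 : Fin n → F) (MvPolynomial.C u) = u := MvPolynomial.eval_C u
  obtain ⟨Φ, hΦ, hP⟩ := P.exists_sub_mem_and_eval_mem_pow_succ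
    (a := MvPolynomial.C u) (c := MvPolynomial.C ((P.derivative.map (MvPolynomial.eval 0)).eval u)⁻¹)
    (by rw [MvPolynomial.mem_span_range_X_iff_eval_zero, ← eval_map_apply, hu, h0])
    (by rw [MvPolynomial.mem_span_range_X_iff_eval_zero, map_sub, map_one, map_mul,
      ← eval_map_apply, hu, MvPolynomial.eval_C, mul_inv_cancel₀ h1, sub_self]) k
  rw [MvPolynomial.mem_span_range_X_iff_eval_zero, map_sub, hu, sub_eq_zero] at hΦ
  exact ⟨Φ, hΦ, hP⟩

/-- Newton iteration: if `P ∈ F[x₁,…,xₙ][y]` is monic in `y`, and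
`u ∈ F` satisfies `P(0,u) = 0` and `(∂P/∂y)(0,u) ≠ 0`, then for every `k ≥ 0`
there is `Φₖ ∈ F[x₁,…,xₙ]` with `Φₖ(0) = u` and `P(x,Φₖ(x)) ∈ ⟨x₁,…,xₙ⟩^{k+1}`. -/
theorem stmt6 {n : ℕ} {F : Type*} [Field F] [CharZero F]
    (P : Polynomial (MvPolynomial (Fin n) F)) (hP : P.Monic) (u : F)
    (h0 : Polynomial.eval u (P.map (MvPolynomial.eval (0 : Fin n → F))) = 0)
    (h1 : Polynomial.eval u
        ((Polynomial.derivative P).map (MvPolynomial.eval (0 : Fin n → F))) ≠ 0) :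
    ∀ k : ℕ, ∃ Φ : MvPolynomial (Fin n) F,
      MvPolynomial.eval (0 : Fin n → F) Φ = u ∧
      Polynomial.eval Φ P ∈
        (Ideal.span (Set.range (MvPolynomial.X : Fin n → MvPolynomial (Fin n) F))) ^ (k + 1) :=
  stmt6_general P u h0 h1
end

section
/- Let F be a field of characteristic zero. Let φ ∈ F[x₁,…,xₙ] and let G ∈ F[x₁,…,xₙ,y] be irreducible and monic in y with deg_y G = d_y, with the total degree of G in the variables x₁,…,xₙ at most d, and such that G(x, φ(x)) ∈ ⟨x₁,…,xₙ⟩^k for some integer k > 2·d_y·d. If H ∈ F[x₁,…,xₙ,y] is a nonzero polynomial that is monic in y, has deg_y H ≤ d_y, has total degree in the variables x₁,…,xₙ at most d, and satisfies H(x, φ(x)) ∈ ⟨x₁,…,xₙ⟩^k, then H = G. -/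
/-!
The resultant `Res_y(G, H)` is a combination `a G + b H` with polynomial cofactors, so substituting
`y := φ` puts it in `⟨x₁,…,xₙ⟩^k`. Being the determinant of the Sylvester matrix, whose entries are
coefficients of `G` and `H`, it has total degree at most `2 d_y d < k`, hence vanishes. Over the
fraction field `G` stays irreducible (Gauss) and now shares a factor with `H`, so `G ∣ H`; both being
monic with `deg_y H ≤ deg_y G`, they are equal.
-/

open Polynomial

namespace MvPolynomial

variable {σ R : Type*}

theorem eq_zero_of_mem_pow_idealOfVars_of_totalDegree_lt [CommSemiring R] {k : ℕ}
    {p : MvPolynomial σ R} (hp : p ∈ idealOfVars σ R ^ k) (hdeg : p.totalDegree < k) : p = 0 := by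
  by_contra hp0
  obtain ⟨m, hm⟩ := support_nonempty.mpr hp0
  have hk : k ≤ m.degree := (mem_pow_idealOfVars_iff k p).mp hp m hm
  have hm_le : m.degree ≤ p.totalDegree := le_totalDegree hm
  omega

theorem totalDegree_det_le [CommRing R] {ι : Type*} [Fintype ι] [DecidableEq ι]
    (M : Matrix ι ι (MvPolynomial σ R)) {d : ℕ} (hM : ∀ i j, (M i j).totalDegree ≤ d) :
    M.det.totalDegree ≤ Fintype.card ι * d := by
  rw [Matrix.det_apply]
  refine (totalDegree_finsetSum _ _).trans (Finset.sup_le fun τ _ => ?_)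
  rw [Units.smul_def]
  refine (totalDegree_smul_le _ _).trans <| (totalDegree_finsetProd _ _).trans ?_
  calc ∑ i, (M (τ i) i).totalDegree ≤ ∑ _i : ι, d := Finset.sum_le_sum fun i _ => hM _ _
    _ = Fintype.card ι * d := by simp

end MvPolynomial

namespace Polynomial

theorem resultant_mem_of_eval_mem {R : Type*} [CommRing R] {I : Ideal R} {f g : R[X]} {m n : ℕ}
    (a : R) (hf : f.natDegree ≤ m) (hg : g.natDegree ≤ n) (hmn : m ≠ 0 ∨ n ≠ 0)
    (hfa : f.eval a ∈ I) (hga : g.eval a ∈ I) : f.resultant g m n ∈ I := by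
  obtain ⟨p, q, -, -, hpq⟩ := exists_mul_add_mul_eq_C_resultant f g hf hg hmn
  have h := congrArg (eval a) hpq
  rw [eval_add, eval_mul, eval_mul, eval_C] at h
  rw [← h]
  exact I.add_mem (I.mul_mem_right _ hfa) (I.mul_mem_right _ hga)

theorem totalDegree_resultant_le {σ R : Type*} [CommRing R] (f g : (MvPolynomial σ R)[X])
    (m n : ℕ) {d : ℕ} (hf : ∀ i, (f.coeff i).totalDegree ≤ d)
    (hg : ∀ i, (g.coeff i).totalDegree ≤ d) :
    (f.resultant g m n).totalDegree ≤ (m + n) * d := by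
  refine (MvPolynomial.totalDegree_det_le (d := d) _ fun i j => ?_).trans_eq (by simp)
  induction j using Fin.addCases <;>
    simp only [sylvester, Matrix.of_apply, Fin.addCases_left, Fin.addCases_right] <;>
    split_ifs <;> simp [hf, hg]

theorem Monic.dvd_of_resultant_eq_zero {R : Type*} [CommRing R] [IsDomain R]
    [IsIntegrallyClosed R] {f g : R[X]} (hf : f.Monic) (hirr : Irreducible f)
    (hres : f.resultant g = 0) : f ∣ g := by
  set K := FractionRing R
  have hinj : Function.Injective (algebraMap R K) := IsFractionRing.injective R K
  have hresK : (f.map (algebraMap R K)).resultant (g.map (algebraMap R K)) = 0 := by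
    rw [natDegree_map_eq_of_injective hinj, natDegree_map_eq_of_injective hinj,
      resultant_map_map, hres, map_zero]
  have hirrK : Irreducible (f.map (algebraMap R K)) :=
    hf.irreducible_iff_irreducible_map_fraction_map.mp hirr
  rw [← map_dvd_map _ hinj hf, ← not_not (a := _ ∣ _), ← hirrK.coprime_iff_not_dvd]
  exact (resultant_eq_zero_iff.mp hresK).2

end Polynomial

theorem stmt9_general {n : ℕ} {F : Type*} [Field F]
    (φ : MvPolynomial (Fin n) F) (G H : Polynomial (MvPolynomial (Fin n) F))
    (d_y d k : ℕ)
    (hGirr : Irreducible G) (hGmonic : G.Monic) (hGdeg : G.natDegree = d_y)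
    (hGcoeff : ∀ i, (G.coeff i).totalDegree ≤ d)
    (hk : 2 * d_y * d < k)
    (hGφ : Polynomial.eval φ G ∈
      (Ideal.span (Set.range (MvPolynomial.X : Fin n → MvPolynomial (Fin n) F))) ^ k)
    (hHmonic : H.Monic) (hHdeg : H.natDegree ≤ d_y)
    (hHcoeff : ∀ i, (H.coeff i).totalDegree ≤ d)
    (hHφ : Polynomial.eval φ H ∈
      (Ideal.span (Set.range (MvPolynomial.X : Fin n → MvPolynomial (Fin n) F))) ^ k) :
    H = G := by
  have hG1 : G ≠ 1 := by
    rintro rfl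
    exact hGirr.not_isUnit isUnit_one
  have hGpos : G.natDegree ≠ 0 := (hGmonic.natDegree_pos.mpr hG1).ne'
  have hres_mem : G.resultant H ∈ MvPolynomial.idealOfVars (Fin n) F ^ k :=
    resultant_mem_of_eval_mem φ le_rfl le_rfl (.inl hGpos) hGφ hHφ
  have hres_deg : (G.resultant H).totalDegree < k := calc
    _ ≤ (G.natDegree + H.natDegree) * d := totalDegree_resultant_le G H _ _ hGcoeff hHcoeff
    _ ≤ 2 * d_y * d := by gcongr; omega
    _ < k := hk
  have hres : G.resultant H = 0 :=
    MvPolynomial.eq_zero_of_mem_pow_idealOfVars_of_totalDegree_lt hres_mem hres_deg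
  exact eq_of_monic_of_dvd_of_natDegree_le hGmonic hHmonic
    (hGmonic.dvd_of_resultant_eq_zero hGirr hres) (hGdeg ▸ hHdeg)

/-- uniqueness of minimal polynomials of approximate roots:
if `G` is irreducible, monic in `y`, with `deg_y G = d_y`, `x`-degree at most
`d`, and `G(x,φ(x)) ∈ ⟨x₁,…,xₙ⟩^k` for `k > 2·d_y·d`, then any nonzero `H`
monic in `y`, of `y`-degree at most `d_y` and `x`-degree at most `d` with
`H(x,φ(x)) ∈ ⟨x₁,…,xₙ⟩^k` must equal `G`. -/
theorem stmt9 {n : ℕ} {F : Type*} [Field F] [CharZero F]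
    (φ : MvPolynomial (Fin n) F) (G H : Polynomial (MvPolynomial (Fin n) F))
    (d_y d k : ℕ)
    (hGirr : Irreducible G) (hGmonic : G.Monic) (hGdeg : G.natDegree = d_y)
    (hGcoeff : ∀ i, (G.coeff i).totalDegree ≤ d)
    (hk : 2 * d_y * d < k)
    (hGφ : Polynomial.eval φ G ∈
      (Ideal.span (Set.range (MvPolynomial.X : Fin n → MvPolynomial (Fin n) F))) ^ k)
    (hH0 : H ≠ 0) (hHmonic : H.Monic) (hHdeg : H.natDegree ≤ d_y)
    (hHcoeff : ∀ i, (H.coeff i).totalDegree ≤ d)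
    (hHφ : Polynomial.eval φ H ∈
      (Ideal.span (Set.range (MvPolynomial.X : Fin n → MvPolynomial (Fin n) F))) ^ k) :
    H = G :=
  stmt9_general φ G H d_y d k hGirr hGmonic hGdeg hGcoeff hk hGφ hHmonic hHdeg hHcoeff hHφ
end

section
/- Let M be an r × c matrix with entries in the polynomial ring ℂ[x₁,…,xₙ] such that r ≥ c and the rank of M over the fraction field ℂ(x₁,…,xₙ) equals c. Let M† be the c × r matrix obtained by transposing M and applying complex conjugation to every coefficient of every entry. Then the c × c matrix M†·M has rank c over ℂ(x₁,…,xₙ); equivalently, det(M†·M) is a nonzero polynomial. -/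
/-!
If `M†M v = 0`, then with `u = M v` we get `0 = v†M†M v = ∑ conj(uᵢ) uᵢ`, where `conj` acts on
coefficients. Evaluated at a real point this is `∑ |uᵢ(x)|²`, so `u` vanishes on `ℝⁿ` and hence
`u = 0`; full column rank of `M` then gives `v = 0`. So `det(M†M) ≠ 0`, and `M†M` is invertible
over the fraction field.
-/

open Matrix ComplexConjugate

namespace MvPolynomial

variable {σ : Type*}

theorem eval_ofReal_map_conj (x : σ → ℝ) (p : MvPolynomial σ ℂ) :
    eval (fun i ↦ (x i : ℂ)) (map (starRingEnd ℂ) p) = conj (eval (fun i ↦ (x i : ℂ)) p) := by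
  induction p using MvPolynomial.induction_on <;> simp_all

open scoped ComplexOrder in
/-- At a real point `∑ conj(vᵢ) vᵢ` evaluates to `∑ |vᵢ|²`, and a polynomial vanishing on `ℝ^σ`
is zero. -/
theorem eq_zero_of_map_conj_dotProduct_self_eq_zero {ι : Type*} [Fintype ι]
    {v : ι → MvPolynomial σ ℂ} (h : (fun i ↦ map (starRingEnd ℂ) (v i)) ⬝ᵥ v = 0) : v = 0 := by
  funext i
  refine funext_set (fun _ ↦ Set.range ((↑) : ℝ → ℂ))
    (fun _ ↦ Set.infinite_range_of_injective Complex.ofReal_injective) fun x hx ↦ ?_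
  choose y hy using fun j ↦ hx j trivial
  obtain rfl : (fun j ↦ (y j : ℂ)) = x := _root_.funext hy
  set u : ι → ℂ := fun j ↦ eval (fun k ↦ (y k : ℂ)) (v j)
  have hu : star u ⬝ᵥ u = 0 := by
    simpa only [dotProduct, Pi.star_apply, Complex.star_def, map_sum, map_mul, map_zero,
      eval_ofReal_map_conj] using congrArg (eval fun k ↦ (y k : ℂ)) h
  simpa using congrFun (dotProduct_star_self_eq_zero.mp hu) i

end MvPolynomial

namespace Matrix

variable {m n R : Type*} [Fintype n]

theorem mulVec_eq_zero_of_transpose_map_mul_mulVec_eq_zero [Fintype m] [CommRing R] {τ : R →+* R}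
    (hτ : ∀ w : m → R, (τ ∘ w) ⬝ᵥ w = 0 → w = 0) {M : Matrix m n R} {v : n → R}
    (h : ((M.map τ)ᵀ * M) *ᵥ v = 0) : M *ᵥ v = 0 := by
  refine hτ _ ?_
  have hτMv : τ ∘ (M *ᵥ v) = M.map τ *ᵥ (τ ∘ v) := funext (RingHom.map_mulVec τ M v)
  rw [hτMv, ← vecMul_transpose (M.map τ), ← dotProduct_mulVec, mulVec_mulVec, h,
    dotProduct_zero]

theorem det_transpose_map_mul_ne_zero [Fintype m] [CommRing R] [IsDomain R] [DecidableEq n]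
    {τ : R →+* R} (hτ : ∀ w : m → R, (τ ∘ w) ⬝ᵥ w = 0 → w = 0) {M : Matrix m n R}
    (hM : Function.Injective M.mulVec) : ((M.map τ)ᵀ * M).det ≠ 0 := by
  rw [Ne, ← exists_mulVec_eq_zero_iff]
  rintro ⟨v, hv, hMv⟩
  exact hv (hM (by rw [mulVec_eq_zero_of_transpose_map_mul_mulVec_eq_zero hτ hMv, mulVec_zero]))

theorem mulVec_injective_of_map {S : Type*} [Semiring R] [Semiring S] {f : R →+* S}
    (hf : Function.Injective f) {M : Matrix m n R} (hM : Function.Injective (M.map f).mulVec) :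
    Function.Injective M.mulVec := by
  intro v w h
  have hfvw : f ∘ v = f ∘ w := hM <| by
    funext i
    rw [← RingHom.map_mulVec, ← RingHom.map_mulVec, h]
  exact hf.comp_left hfvw

theorem mulVec_injective_of_rank_eq_card [Field R] {M : Matrix m n R}
    (hM : M.rank = Fintype.card n) : Function.Injective M.mulVec := by
  rw [mulVec_injective_iff, linearIndependent_iff_card_eq_finrank_span, ← hM,
    rank_eq_finrank_span_cols, Set.finrank]

theorem rank_map_of_det_ne_zero {K : Type*} [CommRing R] [Field K] [DecidableEq n] {f : R →+* K}
    (hf : Function.Injective f) {A : Matrix n n R} (hA : A.det ≠ 0) :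
    (A.map f).rank = Fintype.card n := by
  refine rank_of_isUnit _ ((isUnit_iff_isUnit_det _).mpr (isUnit_iff_ne_zero.mpr ?_))
  rw [← RingHom.mapMatrix_apply, ← RingHom.map_det]
  exact (map_ne_zero_iff f hf).mpr hA

end Matrix

theorem stmt11_general {n r c : ℕ} (M : Matrix (Fin r) (Fin c) (MvPolynomial (Fin n) ℂ))
    (hrank : (M.map (algebraMap (MvPolynomial (Fin n) ℂ)
        (FractionRing (MvPolynomial (Fin n) ℂ)))).rank = c) :
    (((M.map (MvPolynomial.map (starRingEnd ℂ))).transpose * M).map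
        (algebraMap (MvPolynomial (Fin n) ℂ)
          (FractionRing (MvPolynomial (Fin n) ℂ)))).rank = c ∧
    ((M.map (MvPolynomial.map (starRingEnd ℂ))).transpose * M).det ≠ 0 := by
  have hφ := IsFractionRing.injective (MvPolynomial (Fin n) ℂ)
    (FractionRing (MvPolynomial (Fin n) ℂ))
  have hM : Function.Injective M.mulVec := mulVec_injective_of_map hφ
    (mulVec_injective_of_rank_eq_card (by rw [hrank, Fintype.card_fin]))
  have hdet := det_transpose_map_mul_ne_zero
    (fun _ ↦ MvPolynomial.eq_zero_of_map_conj_dotProduct_self_eq_zero) hM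
  exact ⟨by simpa using rank_map_of_det_ne_zero hφ hdet, hdet⟩

/-- if `M` is an `r × c` matrix over `ℂ[x₁,…,xₙ]` with `r ≥ c`
and rank `c` over the fraction field `ℂ(x₁,…,xₙ)`, then `M† · M` has rank `c`
over `ℂ(x₁,…,xₙ)`; equivalently, `det(M† · M)` is a nonzero polynomial.
Here `M†` is the conjugate transpose, conjugating each coefficient of each
entry. -/
theorem stmt11 {n r c : ℕ} (M : Matrix (Fin r) (Fin c) (MvPolynomial (Fin n) ℂ))
    (hrc : c ≤ r)
    (hrank : (M.map (algebraMap (MvPolynomial (Fin n) ℂ)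
        (FractionRing (MvPolynomial (Fin n) ℂ)))).rank = c) :
    (((M.map (MvPolynomial.map (starRingEnd ℂ))).transpose * M).map
        (algebraMap (MvPolynomial (Fin n) ℂ)
          (FractionRing (MvPolynomial (Fin n) ℂ)))).rank = c ∧
    ((M.map (MvPolynomial.map (starRingEnd ℂ))).transpose * M).det ≠ 0 :=
  stmt11_general M hrank
end
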